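/- arXiv:2605.05890 — 2 statements merged into one kernel-verified Lean document; each statement's English description precedes it below -/
import Mathlib

section
/- Suppose u ∈ [0,1], Φ : X → Z is a bijection with inverse Ψ, and for each a ∈ {0,1} the function z ↦ (1/B)·d(Ψ(z), a) lies in a function family G on Z, where B > 0 and d : X × {0,1} → ℝ≥0. Let p_Φ^{a=1}, p_Φ^{a=0} be the pushforwards of μ₁ = p(·|a=1) and μ₀ = p(·|a=0) under Φ. Then ε_CF ≤ (1−u)·ε_F^{a=1} + u·ε_F^{a=0} + B·IPM_G(p_Φ^{a=1}, p_Φ^{a=0}), where ε_CF = (1−u)·∫ d(x,1) dμ₀ + u·∫ d(x,0) dμ₁, ε_F^{a=1} = ∫ d(x,1) dμ₁, ε_F^{a=0} = ∫ d(x,0) dμ₀. -/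
open MeasureTheory

/-- Counterfactual distributional generalization bound (Lemma `cfdb`).
`Φ : X → Z` is a measurable bijection with measurable inverse `Ψ`; the
normalized distance functions `z ↦ d (Ψ z) a / B` belong to the function
family `G`; then the counterfactual loss is bounded by the factual group
losses plus `B` times the IPM between the pushforward representation
distributions. Treatment `a = 1` is `true`, `a = 0` is `false`. -/
theorem counterfactual_bound_IPM
    {X Z : Type*} [MeasurableSpace X] [MeasurableSpace Z]
    (μ₀ μ₁ : Measure X) [IsProbabilityMeasure μ₀] [IsProbabilityMeasure μ₁]
    (u : ℝ) (hu0 : 0 ≤ u) (hu1 : u ≤ 1)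
    (Φ : X → Z) (Ψ : Z → X) (hΦ : Measurable Φ) (hΨ : Measurable Ψ)
    (hinv₁ : Function.LeftInverse Ψ Φ) (hinv₂ : Function.RightInverse Ψ Φ)
    (d : X → Bool → ℝ) (hd0 : ∀ x a, 0 ≤ d x a)
    (hdmeas : ∀ a, Measurable (fun x => d x a))
    (hint : ∀ a, Integrable (fun x => d x a) μ₀ ∧ Integrable (fun x => d x a) μ₁)
    (B : ℝ) (hB : 0 < B)
    (G : Set (Z → ℝ))
    (hG : ∀ a : Bool, (fun z => d (Ψ z) a / B) ∈ G)
    (hbdd : BddAbove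
      ((fun g : Z → ℝ => |∫ z, g z ∂(μ₁.map Φ) - ∫ z, g z ∂(μ₀.map Φ)|) '' G)) :
    (1 - u) * ∫ x, d x true ∂μ₀ + u * ∫ x, d x false ∂μ₁
      ≤ (1 - u) * ∫ x, d x true ∂μ₁ + u * ∫ x, d x false ∂μ₀
        + B * sSup ((fun g : Z → ℝ =>
            |∫ z, g z ∂(μ₁.map Φ) - ∫ z, g z ∂(μ₀.map Φ)|) '' G) := by
  set S := sSup ((fun g : Z → ℝ =>
      |∫ z, g z ∂(μ₁.map Φ) - ∫ z, g z ∂(μ₀.map Φ)|) '' G) with hS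
  have key : ∀ a : Bool, |∫ x, d x a ∂μ₁ - ∫ x, d x a ∂μ₀| ≤ B * S := by
    intro a
    have hmap : ∀ μ : Measure X, ∫ z, d (Ψ z) a / B ∂(μ.map Φ)
        = (∫ x, d x a ∂μ) / B := by
      intro μ
      have hm : Measurable fun z => d (Ψ z) a / B :=
        ((hdmeas a).comp hΨ).div_const B
      rw [integral_map hΦ.aemeasurable hm.aestronglyMeasurable]
      simp only [hinv₁ _]
      rw [integral_div]
    have hmem : |∫ z, d (Ψ z) a / B ∂(μ₁.map Φ) - ∫ z, d (Ψ z) a / B ∂(μ₀.map Φ)|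
        ≤ S := le_csSup hbdd ⟨_, hG a, rfl⟩
    rw [hmap, hmap, div_sub_div_same, abs_div, abs_of_pos hB, div_le_iff₀ hB] at hmem
    linarith [hmem]
  have h1 := key true
  have h0 := key false
  rw [abs_le] at h1 h0
  nlinarith [h1.1, h1.2, h0.1, h0.2]
end

section
/- Under the hypotheses of the counterfactual bound (Φ invertible, normalized distance functions in the 1-Lipschitz class G with constant B_Φ), the expected distributional error ε_D = ∫ (d(x,1) + d(x,0)) dp(x), where p = u·μ₁ + (1−u)·μ₀, satisfies ε_D ≤ ε_F^{a=0} + ε_F^{a=1} + B_Φ · W₁(p_Φ^{a=1}, p_Φ^{a=0}), where W₁ denotes the 1-Wasserstein distance between the pushforward distributions of the treated and control covariates under Φ. -/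
open MeasureTheory
open scoped NNReal

/-- Main distributional generalization bound (Theorem 4.1). The expected
distributional error over the population `p = u•μ₁ + (1-u)•μ₀` is bounded by
the factual group losses plus `B_Φ` times the 1-Wasserstein distance
(realized as the IPM over 1-Lipschitz functions, per Kantorovich–Rubinstein)
between the pushforward representation distributions. -/
theorem expected_distributional_error_bound
    {X Z : Type*} [MeasurableSpace X] [MetricSpace Z] [MeasurableSpace Z]
    [BorelSpace Z]
    (μ₀ μ₁ : Measure X) [IsProbabilityMeasure μ₀] [IsProbabilityMeasure μ₁]
    (u : ℝ≥0) (hu : u ≤ 1)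
    (Φ : X → Z) (Ψ : Z → X) (hΦ : Measurable Φ) (hΨ : Measurable Ψ)
    (hinv₁ : Function.LeftInverse Ψ Φ) (hinv₂ : Function.RightInverse Ψ Φ)
    (d : X → Bool → ℝ) (hd0 : ∀ x a, 0 ≤ d x a)
    (hdmeas : ∀ a, Measurable (fun x => d x a))
    (hint : ∀ a, Integrable (fun x => d x a) μ₀ ∧ Integrable (fun x => d x a) μ₁)
    (B : ℝ) (hB : 0 < B)
    (hLip : ∀ a : Bool, LipschitzWith 1 (fun z => d (Ψ z) a / B))
    (hbdd : BddAbove {r : ℝ | ∃ g : Z → ℝ, LipschitzWith 1 g ∧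
      r = |∫ z, g z ∂(μ₁.map Φ) - ∫ z, g z ∂(μ₀.map Φ)|}) :
    ∫ x, (d x true + d x false) ∂((u : ℝ≥0) • μ₁ + (1 - u : ℝ≥0) • μ₀)
      ≤ (∫ x, d x false ∂μ₀) + (∫ x, d x true ∂μ₁)
        + B * sSup {r : ℝ | ∃ g : Z → ℝ, LipschitzWith 1 g ∧
            r = |∫ z, g z ∂(μ₁.map Φ) - ∫ z, g z ∂(μ₀.map Φ)|} := by
  set W := sSup {r : ℝ | ∃ g : Z → ℝ, LipschitzWith 1 g ∧
      r = |∫ z, g z ∂(μ₁.map Φ) - ∫ z, g z ∂(μ₀.map Φ)|} with hW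
  -- For each a, the normalized difference of means is bounded by W
  have hdiff : ∀ a : Bool,
      |∫ x, d x a ∂μ₁ - ∫ x, d x a ∂μ₀| ≤ B * W := by
    intro a
    have hmemg : ∀ μ : Measure X,
        ∫ z, d (Ψ z) a / B ∂(μ.map Φ) = (∫ x, d x a ∂μ) / B := by
      intro μ
      have hm : AEStronglyMeasurable (fun z => d (Ψ z) a / B) (μ.map Φ) :=
        (((hdmeas a).comp hΨ).div_const B).aestronglyMeasurable
      rw [integral_map hΦ.aemeasurable hm]
      simp only [hinv₁ _]
      rw [integral_div]
    have hmem : |∫ x, d x a ∂μ₁ - ∫ x, d x a ∂μ₀| / B ∈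
        {r : ℝ | ∃ g : Z → ℝ, LipschitzWith 1 g ∧
          r = |∫ z, g z ∂(μ₁.map Φ) - ∫ z, g z ∂(μ₀.map Φ)|} := by
      refine ⟨fun z => d (Ψ z) a / B, hLip a, ?_⟩
      rw [hmemg, hmemg, div_sub_div_same, abs_div, abs_of_pos hB]
    have := le_csSup hbdd hmem
    rw [div_le_iff₀ hB] at this
    linarith [this]
  -- decompose the integral over the mixture
  have hkey : ∀ g : X → ℝ, Integrable g μ₀ → Integrable g μ₁ →
      ∫ x, g x ∂((u : ℝ≥0) • μ₁ + (1 - u : ℝ≥0) • μ₀)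
        = (u : ℝ) * ∫ x, g x ∂μ₁ + (1 - (u : ℝ)) * ∫ x, g x ∂μ₀ := by
    intro g hg0 hg1
    rw [integral_add_measure (hg1.smul_measure_nnreal) (hg0.smul_measure_nnreal),
      integral_smul_nnreal_measure, integral_smul_nnreal_measure]
    have : ((1 - u : ℝ≥0) : ℝ) = 1 - (u : ℝ) := by
      rw [NNReal.coe_sub hu, NNReal.coe_one]
    rw [NNReal.smul_def, NNReal.smul_def, this]
    simp [smul_eq_mul]
  have h1 := (hint true).1
  have h2 := (hint true).2
  have h3 := (hint false).1
  have h4 := (hint false).2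
  rw [hkey (fun x => d x true + d x false) (h1.add h3) (h2.add h4),
    integral_add h2 h4, integral_add h1 h3]
  have hu' : (u : ℝ) ≤ 1 := by exact_mod_cast hu
  have hu0 : (0 : ℝ) ≤ (u : ℝ) := u.coe_nonneg
  have hA := hdiff true
  have hBb := hdiff false
  have hA' := abs_le.1 hA
  have hB' := abs_le.1 hBb
  nlinarith [hA'.1, hA'.2, hB'.1, hB'.2]
end
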